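/- Let W be a standard Brownian motion, t > 0, κ ≥ 0, x, y, r ∈ ℝ, define the pinned Brownian bridge B^{x,y}(s) := W(s) − (s/t)·W(t) + x + (s/t)(y − x) for s ∈ [0,t], and the sojourn time τ_r(t) := ∫₀ᵗ 1{B^{x,y}(s) > r} ds. Then | E[exp(−κ·τ_r(t))] − ( 1 − κ·∫₀ᵗ Φ̄( (r − x − (s/t)(y − x)) / sqrt( (t − s)s/t ) ) ds ) | ≤ κ²t²/2, where Φ̄(z) := 1 − Φ(z) and Φ is the standard normal cumulative distribution function. -/

import Mathlib

open MeasureTheory ProbabilityTheory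

/-- `W` is a standard Brownian motion under `P`: it has continuous paths, starts at `0`,
each `W s` is measurable, and it is a centered Gaussian process with covariance
`E[W(s)W(u)] = min(s,u)`, encoded by requiring every finite linear combination
`∑ c i * W (s i)` (at nonnegative times) to be Gaussian with mean `0` and variance
`∑ i ∑ j, c i * c j * min (s i) (s j)`. -/
def IsStdBrownianMotion {Ω : Type*} [MeasurableSpace Ω] (P : Measure Ω)
    (W : ℝ → Ω → ℝ) : Prop :=
  (∀ ω, Continuous fun s => W s ω) ∧
  (∀ ω, W 0 ω = 0) ∧
  (∀ s, Measurable (W s)) ∧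
  ∀ (n : ℕ) (s : Fin n → ℝ) (c : Fin n → ℝ), (∀ i, 0 ≤ s i) →
    Measure.map (fun ω => ∑ i, c i * W (s i) ω) P =
      gaussianReal 0 (∑ i, ∑ j, c i * c j * min (s i) (s j)).toNNReal

/-- The standard normal cumulative distribution function `Φ`. -/
noncomputable def stdNormalCDF (z : ℝ) : ℝ :=
  (gaussianReal 0 1 (Set.Iic z)).toReal

lemma exp_quad_bound {u : ℝ} (hu : 0 ≤ u) : |Real.exp (-u) - (1 - u)| ≤ u ^ 2 / 2 := by
  have hlow : 1 - u ≤ Real.exp (-u) := by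
    have := Real.add_one_le_exp (-u); linarith
  have hup : Real.exp (-u) ≤ 1 - u + u ^ 2 / 2 := by
    set g : ℝ → ℝ := fun u => 1 - u + u ^ 2 / 2 - Real.exp (-u) with hg
    have hderiv : ∀ v : ℝ, HasDerivAt g (-1 + v + Real.exp (-v)) v := by
      intro v
      have h1 : HasDerivAt (fun w : ℝ => Real.exp (-w)) (Real.exp (-v) * (-1)) v :=
        (hasDerivAt_neg v).exp
      have h2 : HasDerivAt (fun w : ℝ => 1 - w + w ^ 2 / 2) (-1 + v) v := by
        have := ((hasDerivAt_const v (1:ℝ)).sub (hasDerivAt_id v)).add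
          ((hasDerivAt_pow 2 v).div_const 2)
        exact this.congr_deriv (by norm_num)
      have := h2.sub h1
      exact this.congr_deriv (by ring)
    have hmono : MonotoneOn g (Set.Ici (0:ℝ)) := by
      apply monotoneOn_of_deriv_nonneg (convex_Ici 0)
      · exact ((continuous_const.sub continuous_id).add
          ((continuous_pow 2).div_const 2)).sub
          (Real.continuous_exp.comp continuous_neg) |>.continuousOn
      · intro v _
        exact (hderiv v).differentiableAt.differentiableWithinAt
      · intro v hv
        rw [(hderiv v).deriv]
        have hv0 : (0:ℝ) ≤ v := le_of_lt (by simpa using hv)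
        have := Real.add_one_le_exp (-v); linarith
    have h0 : g 0 = 0 := by simp [hg]
    have := hmono (Set.self_mem_Ici) (Set.mem_Ici.mpr hu) hu
    rw [h0] at this
    simp only [hg] at this
    linarith
  rw [abs_le]
  constructor <;> nlinarith [sq_nonneg u]

lemma gauss_Ioi {v : ℝ} (hv : 0 < v) (a : ℝ) :
    (gaussianReal 0 v.toNNReal (Set.Ioi a)).toReal
      = 1 - stdNormalCDF (a / Real.sqrt v) := by
  set σ := Real.sqrt v with hσdef
  have hσ : 0 < σ := Real.sqrt_pos.mpr hv
  have hmap : (gaussianReal 0 1).map (σ * ·) = gaussianReal 0 v.toNNReal := by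
    rw [gaussianReal_map_const_mul σ]
    congr 1
    · simp
    · rw [mul_one]
      apply NNReal.coe_injective
      simp [Real.sq_sqrt hv.le, Real.coe_toNNReal _ hv.le]
      rw [hσdef, Real.sq_sqrt hv.le]
  rw [← hmap, Measure.map_apply (by fun_prop) measurableSet_Ioi]
  have hpre : (σ * ·) ⁻¹' Set.Ioi a = Set.Ioi (a / σ) := by
    ext z
    simp only [Set.mem_preimage, Set.mem_Ioi]
    rw [div_lt_iff₀ hσ, mul_comm]
  rw [hpre, ← Set.compl_Iic, measure_compl measurableSet_Iic (measure_ne_top _ _),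
    measure_univ, ENNReal.toReal_sub_of_le prob_le_one ENNReal.one_ne_top]
  simp [stdNormalCDF]

/-- Lemma of Section 3.3 with explicit remainder: for the sojourn time
`τ_r(t) := ∫₀ᵗ 1{B^{x,y}(s) > r} ds` of the Brownian bridge
`B^{x,y}(s) = W(s) − (s/t)W(t) + x + (s/t)(y−x)` pinned at `(0,x)` and `(t,y)`,
`|E[exp(−κτ_r(t))] − (1 − κ ∫₀ᵗ Φ̄((r − x − (s/t)(y−x))/sqrt((t−s)s/t)) ds)| ≤ κ²t²/2`. -/
theorem stmt_8 {Ω : Type*} [MeasurableSpace Ω] (P : Measure Ω) [IsProbabilityMeasure P]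
    (W : ℝ → Ω → ℝ) (hW : IsStdBrownianMotion P W)
    (t : ℝ) (ht : 0 < t) (κ : ℝ) (hκ : 0 ≤ κ) (x y r : ℝ) :
    |(∫ ω, Real.exp (-κ * ∫ s in Set.Ioc (0 : ℝ) t,
        Set.indicator (Set.Ioi r) (fun _ => (1 : ℝ))
          (W s ω - (s / t) * W t ω + x + (s / t) * (y - x))) ∂P)
      - (1 - κ * ∫ s in Set.Ioc (0 : ℝ) t,
          (1 - stdNormalCDF ((r - x - (s / t) * (y - x)) /
            Real.sqrt ((t - s) * s / t))))|
      ≤ κ ^ 2 * t ^ 2 / 2 := by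
  obtain ⟨hcont, hzero, hmeas, hgauss⟩ := hW
  set ν : Measure ℝ := volume.restrict (Set.Ioc (0 : ℝ) t) with hν
  haveI : IsFiniteMeasure ν := ⟨by
    rw [hν, Measure.restrict_apply_univ, Real.volume_Ioc]
    exact ENNReal.ofReal_lt_top⟩
  -- the bridge and indicator
  set f : ℝ → Ω → ℝ := fun s ω => W s ω - s / t * W t ω + x + s / t * (y - x) with hfdef
  set G : Ω × ℝ → ℝ := fun p => Set.indicator (Set.Ioi r) (fun _ => (1 : ℝ)) (f p.2 p.1)
    with hGdef
  set τ : Ω → ℝ := fun ω => ∫ s, G (ω, s) ∂ν with hτdef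
  -- indicator pointwise bounds
  have hind : ∀ z : ℝ, Set.indicator (Set.Ioi r) (fun _ => (1 : ℝ)) z ∈ Set.Icc (0:ℝ) 1 := by
    intro z; by_cases h : z ∈ Set.Ioi r <;> simp [Set.indicator_apply, h]
  -- measurability
  have hWj : Measurable (Function.uncurry fun s ω => W s ω) :=
    measurable_uncurry_of_continuous_of_measurable hcont hmeas
  have hfj : Measurable (fun p : ℝ × Ω => f p.1 p.2) := by
    have h1 : Measurable (fun p : ℝ × Ω => W p.1 p.2) := hWj
    have h2 : Measurable (fun p : ℝ × Ω => p.1 / t * W t p.2) :=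
      (measurable_fst.div_const t).mul ((hmeas t).comp measurable_snd)
    have h3 : Measurable (fun p : ℝ × Ω => p.1 / t * (y - x)) :=
      (measurable_fst.div_const t).mul_const (y - x)
    exact ((h1.sub h2).add_const x).add h3
  have hGj : Measurable G :=
    (measurable_const.indicator measurableSet_Ioi).comp (hfj.comp measurable_swap)
  -- integrability on the product
  have hGint : Integrable G (P.prod ν) := by
    refine (integrable_const (1 : ℝ)).mono' hGj.aestronglyMeasurable
      (Filter.Eventually.of_forall fun p => ?_)
    rw [Real.norm_eq_abs, abs_of_nonneg (hind _).1]
    exact (hind _).2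
  have hτint : Integrable τ P := hGint.integral_prod_left
  -- τ bounds
  have hτ0 : ∀ ω, 0 ≤ τ ω := fun ω => integral_nonneg fun s => (hind _).1
  have hτt : ∀ ω, τ ω ≤ t := by
    intro ω
    have h1 : τ ω ≤ ∫ _ , (1:ℝ) ∂ν :=
      integral_mono_of_nonneg (Filter.Eventually.of_forall fun s => (hind _).1)
        (integrable_const 1) (Filter.Eventually.of_forall fun s => (hind _).2)
    have h2 : (∫ _ , (1:ℝ) ∂ν) = t := by
      rw [integral_const, measureReal_def, hν, Measure.restrict_apply_univ, Real.volume_Ioc, sub_zero,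
        ENNReal.toReal_ofReal ht.le, smul_eq_mul, mul_one]
    linarith
  -- integrability of exp(-κ τ)
  have hexp_int : Integrable (fun ω => Real.exp (-κ * τ ω)) P := by
    have h1 : AEStronglyMeasurable (fun ω => Real.exp (-κ * τ ω)) P :=
      (Real.continuous_exp.comp (continuous_const.mul continuous_id)).comp_aestronglyMeasurable
        hτint.aestronglyMeasurable
    refine (integrable_const (1 : ℝ)).mono' h1 (Filter.Eventually.of_forall fun ω => ?_)
    rw [Real.norm_eq_abs, abs_of_pos (Real.exp_pos _)]
    have : -κ * τ ω ≤ 0 := by nlinarith [hτ0 ω]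
    calc Real.exp (-κ * τ ω) ≤ Real.exp 0 := Real.exp_le_exp.mpr this
    _ = 1 := Real.exp_zero
  -- Step B: the Taylor estimate
  have key1 : |(∫ ω, Real.exp (-κ * τ ω) ∂P) - (1 - κ * ∫ ω, τ ω ∂P)| ≤ κ ^ 2 * t ^ 2 / 2 := by
    have heq : (∫ ω, Real.exp (-κ * τ ω) ∂P) - (1 - κ * ∫ ω, τ ω ∂P)
        = ∫ ω, (Real.exp (-κ * τ ω) - (1 - κ * τ ω)) ∂P := by
      have ha : Integrable (fun ω => 1 - κ * τ ω) P := (integrable_const 1).sub (hτint.const_mul κ)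
      have hb : ∫ ω, (Real.exp (-κ * τ ω) - (1 - κ * τ ω)) ∂P
          = (∫ ω, Real.exp (-κ * τ ω) ∂P) - ∫ ω, (1 - κ * τ ω) ∂P :=
        integral_sub hexp_int ha
      have hc : ∫ ω, (1 - κ * τ ω) ∂P = (∫ _ : Ω, (1:ℝ) ∂P) - ∫ ω, κ * τ ω ∂P :=
        integral_sub (integrable_const 1) (hτint.const_mul κ)
      rw [hb, hc, integral_const, integral_const_mul]
      simp
    rw [heq]
    have hptwise : ∀ ω, |Real.exp (-κ * τ ω) - (1 - κ * τ ω)| ≤ κ ^ 2 * t ^ 2 / 2 := by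
      intro ω
      have h1 := exp_quad_bound (mul_nonneg hκ (hτ0 ω))
      rw [neg_mul] at *
      refine h1.trans ?_
      have hτsq : τ ω ^ 2 ≤ t ^ 2 := pow_le_pow_left₀ (hτ0 ω) (hτt ω) 2
      have : (κ * τ ω) ^ 2 ≤ κ ^ 2 * t ^ 2 := by
        calc (κ * τ ω) ^ 2 = κ ^ 2 * τ ω ^ 2 := by ring
        _ ≤ κ ^ 2 * t ^ 2 := mul_le_mul_of_nonneg_left hτsq (sq_nonneg κ)
      linarith
    calc |∫ ω, (Real.exp (-κ * τ ω) - (1 - κ * τ ω)) ∂P|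
        ≤ ∫ ω, |Real.exp (-κ * τ ω) - (1 - κ * τ ω)| ∂P := by
          simpa [Real.norm_eq_abs] using
            norm_integral_le_integral_norm (fun ω => Real.exp (-κ * τ ω) - (1 - κ * τ ω))
      _ ≤ ∫ _ , κ ^ 2 * t ^ 2 / 2 ∂P :=
          integral_mono_of_nonneg (Filter.Eventually.of_forall fun ω => abs_nonneg _)
            (integrable_const _) (Filter.Eventually.of_forall hptwise)
      _ = κ ^ 2 * t ^ 2 / 2 := by simp
  -- Step C: Fubini
  have hswap : ∫ ω, τ ω ∂P = ∫ s, (∫ ω, G (ω, s) ∂P) ∂ν :=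
    integral_integral_swap hGint
  -- Step D: inner integral computation for s ∈ Ioo 0 t
  have hinner : ∀ s ∈ Set.Ioo (0:ℝ) t,
      (∫ ω, G (ω, s) ∂P)
        = 1 - stdNormalCDF ((r - x - s / t * (y - x)) / Real.sqrt ((t - s) * s / t)) := by
    intro s hs
    set m : ℝ := x + s / t * (y - x) with hm
    set Gs : Ω → ℝ := fun ω => W s ω - s / t * W t ω with hGs
    have hGmeas : Measurable Gs := (hmeas s).sub ((hmeas t).const_mul (s / t))
    have hmap : Measure.map Gs P = gaussianReal 0 ((t - s) * s / t).toNNReal := by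
      have hnn : ∀ i, 0 ≤ (![s, t] : Fin 2 → ℝ) i := by
        intro i; fin_cases i <;> simp [hs.1.le, ht.le]
      have h := hgauss 2 ![s, t] ![1, -(s / t)] hnn
      have h1 : (fun ω => ∑ i : Fin 2, ![(1:ℝ), -(s / t)] i * W (![s, t] i) ω) = Gs := by
        funext ω
        simp [Fin.sum_univ_two, hGs]
        ring
      have h2 : (∑ i : Fin 2, ∑ j : Fin 2, ![(1:ℝ), -(s/t)] i * ![(1:ℝ), -(s/t)] j
          * min (![s, t] i) (![s, t] j)) = (t - s) * s / t := by
        simp [Fin.sum_univ_two, min_eq_left hs.2.le, min_eq_right hs.2.le]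
        field_simp
        ring
      rw [h1, h2] at h
      exact h
    have hmem : ∀ ω, (f s ω ∈ Set.Ioi r ↔ Gs ω ∈ Set.Ioi (r - m)) := by
      intro ω
      simp only [Set.mem_Ioi, hfdef, hGs, hm]
      constructor <;> intro <;> linarith
    have hset : (fun ω => G (ω, s))
        = Set.indicator (Gs ⁻¹' Set.Ioi (r - m)) (fun _ => (1:ℝ)) := by
      funext ω
      show Set.indicator (Set.Ioi r) (fun _ => (1:ℝ)) (f s ω) = _
      by_cases h : Gs ω ∈ Set.Ioi (r - m)
      · rw [Set.indicator_of_mem ((hmem ω).mpr h),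
          Set.indicator_of_mem (show ω ∈ Gs ⁻¹' Set.Ioi (r - m) from h)]
      · rw [Set.indicator_of_notMem (fun hh => h ((hmem ω).mp hh)),
          Set.indicator_of_notMem (show ω ∉ Gs ⁻¹' Set.Ioi (r - m) from h)]
    rw [hset, integral_indicator_const (1:ℝ) (hGmeas measurableSet_Ioi), smul_eq_mul, mul_one]
    have hP : P (Gs ⁻¹' Set.Ioi (r - m)) = gaussianReal 0 ((t - s) * s / t).toNNReal
        (Set.Ioi (r - m)) := by
      rw [← hmap, Measure.map_apply hGmeas measurableSet_Ioi]
    have hv : 0 < (t - s) * s / t := div_pos (mul_pos (sub_pos.mpr hs.2) hs.1) ht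
    rw [measureReal_def, hP, gauss_Ioi hv (r - m)]
    have : r - m = r - x - s / t * (y - x) := by rw [hm]; ring
    rw [this]
  -- a.e. congruence on Ioc
  have hcongr : ∫ s, (∫ ω, G (ω, s) ∂P) ∂ν
      = ∫ s in Set.Ioc (0:ℝ) t,
          (1 - stdNormalCDF ((r - x - s / t * (y - x)) / Real.sqrt ((t - s) * s / t))) := by
    rw [hν]
    apply setIntegral_congr_ae measurableSet_Ioc
    have hne : ∀ᵐ (s : ℝ), s ≠ t := by
      rw [ae_iff]
      have : {a : ℝ | ¬ a ≠ t} = {t} := by ext a; simp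
      rw [this]
      exact measure_singleton t
    filter_upwards [hne] with s hst hmem
    exact hinner s ⟨hmem.1, lt_of_le_of_ne hmem.2 hst⟩
  -- conclude
  show |(∫ ω, Real.exp (-κ * τ ω) ∂P)
      - (1 - κ * ∫ s in Set.Ioc (0:ℝ) t,
          (1 - stdNormalCDF ((r - x - s / t * (y - x)) / Real.sqrt ((t - s) * s / t))))|
      ≤ κ ^ 2 * t ^ 2 / 2
  rw [← hcongr, ← hswap]
  exact key1
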